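/- For any positive integer n and real number a, Σ_{k=0}^{n-1} C(a,k)*C(-1-a,k)*C(2k,k)/4^k · (3k^2 - (2a^2+2a-1)k - a(a+1)) = 2n^3 · C(a,n)*C(-1-a,n)*C(2n,n)/4^n. -/

import Mathlib

/-!
The sum telescopes: writing `t k = C(a,k) C(-1-a,k) C(2k,k) / 4^k`, the ratio
`t (k+1) / t k = (a-k)(-1-a-k)(2k+1) / (2(k+1)^3)` shows that the `k`-th summand equals
`2(k+1)^3 t (k+1) - 2k^3 t k`.
-/

/-- Generalized binomial coefficient `C(x, k) = x(x-1)⋯(x-k+1)/k!` for real `x`. -/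
noncomputable def gbc (x : ℝ) (k : ℕ) : ℝ :=
  (∏ i ∈ Finset.range k, (x - i)) / (Nat.factorial k)

lemma gbc_succ (x : ℝ) (k : ℕ) : gbc x (k + 1) = gbc x k * (x - k) / (k + 1) := by
  simp only [gbc, Finset.prod_range_succ, Nat.factorial_succ]
  push_cast
  field_simp

lemma cast_choose_two_mul_succ (k : ℕ) :
    ((2 * (k + 1)).choose (k + 1) : ℝ) * (k + 1) = 2 * (2 * k + 1) * (2 * k).choose k := by
  have h := Nat.succ_mul_centralBinom_succ k
  simp only [Nat.centralBinom] at h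
  rw [mul_comm]
  exact_mod_cast h

noncomputable def gbcTerm (a : ℝ) (k : ℕ) : ℝ :=
  gbc a k * gbc (-1 - a) k * (Nat.choose (2 * k) k) / 4 ^ k

lemma gbcTerm_succ (a : ℝ) (k : ℕ) :
    2 * ((k : ℝ) + 1) ^ 3 * gbcTerm a (k + 1) =
      gbcTerm a k * ((a - k) * (-1 - a - k) * (2 * k + 1)) := by
  have hk : (k : ℝ) + 1 ≠ 0 := by positivity
  have hchoose : ((2 * (k + 1)).choose (k + 1) : ℝ) =
      2 * (2 * k + 1) * (2 * k).choose k / (k + 1) :=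
    eq_div_of_mul_eq hk (cast_choose_two_mul_succ k)
  simp only [gbcTerm, gbc_succ, hchoose, pow_succ]
  field_simp
  ring

lemma gbcTerm_mul_eq_sub (a : ℝ) (k : ℕ) :
    gbcTerm a k * (3 * (k : ℝ) ^ 2 - (2 * a ^ 2 + 2 * a - 1) * k - a * (a + 1)) =
      2 * ((k + 1 : ℕ) : ℝ) ^ 3 * gbcTerm a (k + 1) - 2 * (k : ℝ) ^ 3 * gbcTerm a k := by
  push_cast
  linear_combination -(gbcTerm_succ a k)

theorem stmt12_general (n : ℕ) (a : ℝ) :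
    ∑ k ∈ Finset.range n,
        gbc a k * gbc (-1 - a) k * (Nat.choose (2 * k) k) / 4 ^ k *
          (3 * (k : ℝ) ^ 2 - (2 * a ^ 2 + 2 * a - 1) * k - a * (a + 1)) =
      2 * (n : ℝ) ^ 3 * (gbc a n * gbc (-1 - a) n * (Nat.choose (2 * n) n) / 4 ^ n) := by
  calc _ = ∑ k ∈ Finset.range n,
          (2 * ((k + 1 : ℕ) : ℝ) ^ 3 * gbcTerm a (k + 1) - 2 * (k : ℝ) ^ 3 * gbcTerm a k) :=
        Finset.sum_congr rfl fun k _ => gbcTerm_mul_eq_sub a k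
    _ = 2 * (n : ℝ) ^ 3 * gbcTerm a n - 2 * ((0 : ℕ) : ℝ) ^ 3 * gbcTerm a 0 :=
        Finset.sum_range_sub (fun k : ℕ => 2 * (k : ℝ) ^ 3 * gbcTerm a k) n
    _ = 2 * (n : ℝ) ^ 3 * gbcTerm a n := by simp

theorem stmt12 (n : ℕ) (hn : 0 < n) (a : ℝ) :
    ∑ k ∈ Finset.range n,
        gbc a k * gbc (-1 - a) k * (Nat.choose (2 * k) k) / 4 ^ k *
          (3 * (k : ℝ) ^ 2 - (2 * a ^ 2 + 2 * a - 1) * k - a * (a + 1)) =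
      2 * (n : ℝ) ^ 3 * (gbc a n * gbc (-1 - a) n * (Nat.choose (2 * n) n) / 4 ^ n) :=
  stmt12_general n a
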